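/- Consider the optimization problem b̂ = argmin_b { l(b) + Σ_{i=1}^p λ_i |b|_{(i)} } with λ_1 ≥ ... ≥ λ_p ≥ 0, where l is convex and differentiable, and let U(b) = −∇l(b). If b̂_i ≠ 0 and the number of nonzero entries of b̂ equals r, then sgn(b̂_i) · U_i(b̂) ≥ λ_r; in particular |U_i(b̂)| ≥ λ_r and U_i(b̂) has the same sign as b̂_i whenever λ_r > 0. -/

import Mathlib

/-- The `i`-th largest absolute value of the coordinates of `b : Fin p → ℝ`
(0-indexed). -/
noncomputable def sortedAbs {p : ℕ} (b : Fin p → ℝ) (i : Fin p) : ℝ :=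
  |b (Tuple.sort (fun j => |b j|) i.rev)|

/-- `|b|₍ᵢ₎` with 1-based indexing `i ∈ {1,…,p}` (and `0` outside this range). -/
noncomputable def sAbs {p : ℕ} (b : Fin p → ℝ) (i : ℕ) : ℝ :=
  if h : 1 ≤ i ∧ i ≤ p then sortedAbs b ⟨i - 1, by omega⟩ else 0

/-!
Shrinking `b̂ᵢ` towards zero by `0 < t < |b̂ᵢ|` leaves at most `r` nonzero coordinates, so in
the decreasing rearrangement of the new vector the coordinate `i` sits at a position `k ≤ r`.
Pairing the old vector with that rearrangement changes only the `k`-th term, by `λₖ t`, and by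
the rearrangement inequality this pairing is at most the old penalty; hence the penalty drops by
at least `λₖ t ≥ λᵣ t`. Minimality of `b̂` then gives `l(b̂ - t sgn(b̂ᵢ) eᵢ) - l(b̂) ≥ λᵣ t`,
and dividing by `t → 0⁺` yields `sgn(b̂ᵢ) Uᵢ(b̂) ≥ λᵣ`.
-/

open Finset Filter Topology Function

variable {p : ℕ}

noncomputable def sortAbsPerm (b : Fin p → ℝ) : Equiv.Perm (Fin p) :=
  Fin.revPerm.trans (Tuple.sort fun j => |b j|)

lemma sortedAbs_eq_abs_sortAbsPerm (b : Fin p → ℝ) (j : Fin p) :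
    sortedAbs b j = |b (sortAbsPerm b j)| := rfl

lemma sortedAbs_antitone (b : Fin p → ℝ) : Antitone (sortedAbs b) :=
  fun _ _ hjk => Tuple.monotone_sort (fun j => |b j|) (Fin.rev_le_rev.mpr hjk)

lemma lt_card_ne_zero_of_sortedAbs_ne_zero {b : Fin p → ℝ} {j : Fin p}
    (hj : sortedAbs b j ≠ 0) : (j : ℕ) < #{k | b k ≠ 0} := by
  have hsub :
      (Iic j).map (sortAbsPerm b).toEmbedding ⊆ ({k | b k ≠ 0} : Finset (Fin p)) := by
    intro k hk
    obtain ⟨j', hj', rfl⟩ := mem_map.mp hk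
    have hpos : 0 < sortedAbs b j' :=
      ((abs_nonneg _).lt_of_ne' hj).trans_le (sortedAbs_antitone b (mem_Iic.mp hj'))
    simpa [sortedAbs_eq_abs_sortAbsPerm] using hpos.ne'
  have hcard := card_le_card hsub
  rw [card_map, Fin.card_Iic] at hcard
  omega

lemma sAbs_succ (b : Fin p → ℝ) (j : Fin p) : sAbs b (j + 1) = sortedAbs b j := by
  rw [sAbs, dif_pos ⟨by omega, j.isLt⟩]
  rfl

noncomputable def slopePenalty (lam : ℕ → ℝ) (b : Fin p → ℝ) : ℝ :=
  ∑ k ∈ Icc 1 p, lam k * sAbs b k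

lemma slopePenalty_eq_sum_sortAbsPerm (lam : ℕ → ℝ) (b : Fin p → ℝ) :
    slopePenalty lam b = ∑ j : Fin p, lam (j + 1) * |b (sortAbsPerm b j)| := by
  rw [slopePenalty, ← Finset.Ico_add_one_right_eq_Icc, sum_Ico_eq_sum_range, Nat.add_sub_cancel,
    ← Fin.sum_univ_eq_sum_range]
  simp only [add_comm 1, sAbs_succ, sortedAbs_eq_abs_sortAbsPerm]

variable {lam : ℕ → ℝ}

lemma sum_mul_abs_perm_le_slopePenalty
    (hmono : ∀ i j, 1 ≤ i → i ≤ j → j ≤ p → lam j ≤ lam i)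
    (b : Fin p → ℝ) (σ : Equiv.Perm (Fin p)) :
    ∑ j : Fin p, lam (j + 1) * |b (σ j)| ≤ slopePenalty lam b := by
  have hlam : Antitone fun j : Fin p => lam (j + 1) := fun j j' hjj' =>
    hmono _ _ (by omega) (by simpa using hjj') j'.isLt
  have := (hlam.monovary (sortedAbs_antitone b)).sum_smul_comp_perm_le_sum_smul
    (σ := (sortAbsPerm b).symm * σ)
  simpa [slopePenalty_eq_sum_sortAbsPerm, sortedAbs_eq_abs_sortAbsPerm] using this

theorem slopePenalty_update_le
    (hmono : ∀ i j, 1 ≤ i → i ≤ j → j ≤ p → lam j ≤ lam i)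
    {b : Fin p → ℝ} {i : Fin p} {x : ℝ} (hx : x ≠ 0) (hxb : |x| ≤ |b i|) :
    slopePenalty lam (update b i x) ≤
      slopePenalty lam b - lam #{k | b k ≠ 0} * (|b i| - |x|) := by
  obtain ⟨k₀, hk₀⟩ := (sortAbsPerm (update b i x)).surjective i
  have hk₀_lt : (k₀ : ℕ) < #{k | b k ≠ 0} := by
    calc (k₀ : ℕ) < #{k | update b i x k ≠ 0} :=
          lt_card_ne_zero_of_sortedAbs_ne_zero
            (by simpa [sortedAbs_eq_abs_sortAbsPerm, hk₀])
      _ ≤ #{k | b k ≠ 0} := by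
          refine card_le_card (monotone_filter_right _ fun k _ hk => ?_)
          rcases eq_or_ne k i with rfl | hki
          · exact abs_pos.mp ((abs_pos.mpr hx).trans_le hxb)
          · rwa [update_of_ne hki] at hk
  have hrp : #{k | b k ≠ 0} ≤ p := card_le_univ _ |>.trans_eq (Fintype.card_fin p)
  have hsplit : ∑ j : Fin p, lam (j + 1) * |b (sortAbsPerm (update b i x) j)| =
      slopePenalty lam (update b i x) + lam (k₀ + 1) * (|b i| - |x|) := by
    rw [slopePenalty_eq_sum_sortAbsPerm, ← sub_eq_iff_eq_add', ← sum_sub_distrib,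
      sum_eq_single k₀]
    · simp [hk₀, mul_sub]
    · intro j _ hj
      have : sortAbsPerm (update b i x) j ≠ i := fun h =>
        hj ((sortAbsPerm _).injective (h.trans hk₀.symm))
      simp [update_of_ne this]
    · simp
  have hlam : lam #{k | b k ≠ 0} ≤ lam (k₀ + 1) := hmono _ _ (by omega) (by omega) hrp
  have hle := sum_mul_abs_perm_le_slopePenalty hmono b (sortAbsPerm (update b i x))
  linarith [mul_le_mul_of_nonneg_right hlam (sub_nonneg.mpr hxb)]

lemma HasDerivAt.le_of_eventually_mul_le_sub {φ : ℝ → ℝ} {φ' c x : ℝ}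
    (hφ : HasDerivAt φ φ' x) (h : ∀ᶠ t in 𝓝[>] 0, c * t ≤ φ (x + t) - φ x) : c ≤ φ' := by
  refine ge_of_tendsto hφ.tendsto_slope_zero_right ?_
  filter_upwards [h, self_mem_nhdsWithin] with t ht (htpos : 0 < t)
  rwa [smul_eq_mul, inv_mul_eq_div, le_div_iff₀ htpos]

lemma DifferentiableAt.hasDerivAt_update_sub_mul {ι : Type*} [Fintype ι] [DecidableEq ι]
    {l : (ι → ℝ) → ℝ} {b : ι → ℝ} (hl : DifferentiableAt ℝ l b) (i : ι) (v : ℝ) :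
    HasDerivAt (fun t : ℝ => l (update b i (b i - t * v)))
      (-(v * fderiv ℝ l b (Pi.single i 1))) 0 := by
  have hline : HasDerivAt (fun t : ℝ => b i - t * v) (-v) 0 := by
    simpa using ((hasDerivAt_id (0 : ℝ)).mul_const v).const_sub (b i)
  have hcurve :
      HasDerivAt (fun t : ℝ => update b i (b i - t * v)) (-v • Pi.single i (1 : ℝ)) 0 :=
    (hasDerivAt_update b i _).scomp 0 hline
  have hval : fderiv ℝ l b (-v • Pi.single i 1) = -(v * fderiv ℝ l b (Pi.single i 1)) := by
    rw [map_smul, smul_eq_mul, neg_mul]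
  exact hval ▸ hl.hasFDerivAt.comp_hasDerivAt_of_eq 0 hcurve (by simp)

lemma Real.abs_sub_mul_sign {a t : ℝ} (ht₀ : 0 ≤ t) (ht : t ≤ |a|) :
    |a - t * Real.sign a| = |a| - t := by
  rcases lt_trichotomy a 0 with ha | rfl | ha
  · rw [Real.sign_of_neg ha, abs_of_neg ha] at *
    rw [abs_of_nonpos (by linarith)]; ring
  · obtain rfl : t = 0 := by simp at ht; linarith
    simp
  · rw [Real.sign_of_pos ha, abs_of_pos ha] at *
    rw [abs_of_nonneg (by linarith)]; ring

lemma Real.sign_eq_sign_of_pos_sign_mul {a u : ℝ} (h : 0 < Real.sign a * u) :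
    Real.sign u = Real.sign a := by
  rcases Real.sign_apply_eq a with ha | ha | ha <;> rw [ha] at h ⊢
  · exact Real.sign_of_neg (by linarith)
  · simp at h
  · exact Real.sign_of_pos (by linarith)

theorem slope_score_at_nonzero_general {p : ℕ} (l : (Fin p → ℝ) → ℝ)
    (hdiff : Differentiable ℝ l)
    (lam : ℕ → ℝ)
    (hmono : ∀ i j, 1 ≤ i → i ≤ j → j ≤ p → lam j ≤ lam i)
    (bhat : Fin p → ℝ)
    (hmin : ∀ b, l bhat + ∑ i ∈ Finset.Icc 1 p, lam i * sAbs bhat i ≤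
                 l b + ∑ i ∈ Finset.Icc 1 p, lam i * sAbs b i)
    (r : ℕ) (hr : r = (Finset.univ.filter (fun i => bhat i ≠ 0)).card)
    (U : Fin p → ℝ) (hU : ∀ i, U i = -(fderiv ℝ l bhat (Pi.single i 1)))
    (i : Fin p) (hi : bhat i ≠ 0) :
    lam r ≤ Real.sign (bhat i) * U i ∧ lam r ≤ |U i| ∧
      (0 < lam r → Real.sign (U i) = Real.sign (bhat i)) := by
  set s := Real.sign (bhat i)
  have hslope : HasDerivAt (fun t : ℝ => l (update bhat i (bhat i - t * s))) (s * U i) 0 := by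
    simpa [hU] using (hdiff bhat).hasDerivAt_update_sub_mul i s
  have hscore : lam r ≤ s * U i := by
    refine hslope.le_of_eventually_mul_le_sub ?_
    filter_upwards [Ioo_mem_nhdsGT (abs_pos.mpr hi)] with t ⟨ht₀, ht⟩
    have habs : |bhat i - t * s| = |bhat i| - t := Real.abs_sub_mul_sign ht₀.le ht.le
    have hpen := slopePenalty_update_le hmono (x := bhat i - t * s)
      (abs_pos.mp (by linarith)) (by linarith)
    rw [habs, ← hr] at hpen
    have hmin' : l bhat + slopePenalty lam bhat ≤
        l (update bhat i (bhat i - t * s)) + slopePenalty lam (update bhat i (bhat i - t * s)) :=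
      hmin _
    simp only [zero_add, zero_mul, sub_zero, update_eq_self]
    linarith
  have hs : |s| = 1 := by
    rcases Real.sign_apply_eq_of_ne_zero _ hi with h | h <;> simp [s, h]
  refine ⟨hscore, ?_, fun hpos => Real.sign_eq_sign_of_pos_sign_mul (hpos.trans_le hscore)⟩
  calc lam r ≤ s * U i := hscore
    _ ≤ |s * U i| := le_abs_self _
    _ = |U i| := by rw [abs_mul, hs, one_mul]

/-- at a minimizer `b̂` of the SLOPE-type objective
`l(b) + ∑ λᵢ |b|₍ᵢ₎`, if `b̂ᵢ ≠ 0` and `r` is the number of nonzero entries of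
`b̂`, then `sgn(b̂ᵢ)·Uᵢ(b̂) ≥ λ_r`; in particular `|Uᵢ(b̂)| ≥ λ_r` and `Uᵢ(b̂)`
has the same sign as `b̂ᵢ` whenever `λ_r > 0`.  Here `U(b) = -∇l(b)`. -/
theorem slope_score_at_nonzero {p : ℕ} (l : (Fin p → ℝ) → ℝ)
    (hconv : ConvexOn ℝ Set.univ l) (hdiff : Differentiable ℝ l)
    (lam : ℕ → ℝ)
    (hmono : ∀ i j, 1 ≤ i → i ≤ j → j ≤ p → lam j ≤ lam i)
    (hnonneg : ∀ i, 1 ≤ i → i ≤ p → 0 ≤ lam i)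
    (bhat : Fin p → ℝ)
    (hmin : ∀ b, l bhat + ∑ i ∈ Finset.Icc 1 p, lam i * sAbs bhat i ≤
                 l b + ∑ i ∈ Finset.Icc 1 p, lam i * sAbs b i)
    (r : ℕ) (hr : r = (Finset.univ.filter (fun i => bhat i ≠ 0)).card)
    (U : Fin p → ℝ) (hU : ∀ i, U i = -(fderiv ℝ l bhat (Pi.single i 1)))
    (i : Fin p) (hi : bhat i ≠ 0) :
    lam r ≤ Real.sign (bhat i) * U i ∧ lam r ≤ |U i| ∧
      (0 < lam r → Real.sign (U i) = Real.sign (bhat i)) :=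
  slope_score_at_nonzero_general l hdiff lam hmono bhat hmin r hr U hU i hi
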